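/- Let V be a nonempty discrete subset of ℝ² (every bounded subset of ℝ² contains finitely many points of V) such that ℝu ∩ V = {u, −u} for every u ∈ V. Let θ ∈ ℝ² be a unit vector and v ∈ V be such that 2|v||v×θ| ≤ |v×u| for every u ∈ V with |u| ≤ √2|v| and u ≠ ±v. Then there exists t ∈ ℝ such that |g_t^θ v| ≤ |g_t^θ u| for all u ∈ V, i.e. ℓ(g_t^θ V) = |g_t^θ v|; in fact the set of such t contains a nonempty open interval. -/
import Mathlib


open Pointwise

noncomputable section

/-- Cross product of two vectors in ℝ²: `(a,b) × (c,d) = a d − b c`. -/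
def crossP (u v : ℝ × ℝ) : ℝ := u.1 * v.2 - u.2 * v.1

/-- Euclidean inner product on ℝ². -/
def dotP (u v : ℝ × ℝ) : ℝ := u.1 * v.1 + u.2 * v.2

/-- Euclidean norm on ℝ². -/
def nrm (u : ℝ × ℝ) : ℝ := Real.sqrt (u.1 ^ 2 + u.2 ^ 2)

/-- `gnorm θ t u = |g_t^θ u| = sqrt((u·θ)² e^{−t} + (u×θ)² e^{t})`. -/
def gnorm (θ : ℝ × ℝ) (t : ℝ) (u : ℝ × ℝ) : ℝ :=
  Real.sqrt ((dotP u θ) ^ 2 * Real.exp (-t) + (crossP u θ) ^ 2 * Real.exp t)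

lemma gnorm_nonneg (θ : ℝ × ℝ) (t : ℝ) (u : ℝ × ℝ) : 0 ≤ gnorm θ t u := Real.sqrt_nonneg _

lemma gnorm_sq (θ : ℝ × ℝ) (t : ℝ) (u : ℝ × ℝ) :
    gnorm θ t u ^ 2 = (dotP u θ) ^ 2 * Real.exp (-t) + (crossP u θ) ^ 2 * Real.exp t :=
  Real.sq_sqrt (by positivity)

lemma nrm_sq (u : ℝ × ℝ) : nrm u ^ 2 = u.1 ^ 2 + u.2 ^ 2 := Real.sq_sqrt (by positivity)

lemma nrm_nonneg (u : ℝ × ℝ) : 0 ≤ nrm u := Real.sqrt_nonneg _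

lemma nrm_pos {u : ℝ × ℝ} (hu : u ≠ 0) : 0 < nrm u := by
  apply Real.sqrt_pos.2
  have h : u.1 ≠ 0 ∨ u.2 ≠ 0 := by
    by_contra h; push_neg at h
    exact hu (by rw [Prod.ext_iff]; exact ⟨by simpa using h.1, by simpa using h.2⟩)
  rcases h with h | h
  · nlinarith [sq_nonneg u.2, (sq_nonneg u.1).lt_of_ne (Ne.symm (pow_ne_zero 2 h))]
  · nlinarith [sq_nonneg u.1, (sq_nonneg u.2).lt_of_ne (Ne.symm (pow_ne_zero 2 h))]

lemma theta_sq {θ : ℝ × ℝ} (hθ : nrm θ = 1) : θ.1 ^ 2 + θ.2 ^ 2 = 1 := by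
  have h := nrm_sq θ; rw [hθ] at h; linarith

lemma pyth {θ : ℝ × ℝ} (hθ : nrm θ = 1) (u : ℝ × ℝ) :
    dotP u θ ^ 2 + crossP u θ ^ 2 = nrm u ^ 2 := by
  have h := theta_sq hθ
  rw [nrm_sq]; unfold dotP crossP
  linear_combination (u.1 ^ 2 + u.2 ^ 2) * h

lemma cross_eq {θ : ℝ × ℝ} (hθ : nrm θ = 1) (u w : ℝ × ℝ) :
    crossP u w = crossP u θ * dotP w θ - dotP u θ * crossP w θ := by
  have h := theta_sq hθ
  unfold dotP crossP
  linear_combination (u.2 * w.1 - u.1 * w.2) * h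

lemma cross_le {θ : ℝ × ℝ} (hθ : nrm θ = 1) (t : ℝ) (u w : ℝ × ℝ) :
    |crossP u w| ≤ gnorm θ t u * gnorm θ t w := by
  have h1 : crossP u w ^ 2 ≤ (gnorm θ t u * gnorm θ t w) ^ 2 := by
    rw [mul_pow, gnorm_sq, gnorm_sq, cross_eq hθ u w]
    have hE : Real.exp t * Real.exp (-t) = 1 := by rw [← Real.exp_add]; simp
    have h2 : dotP u θ * crossP u θ * dotP w θ * crossP w θ * (Real.exp t * Real.exp (-t))
        = dotP u θ * crossP u θ * dotP w θ * crossP w θ := by rw [hE]; ring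
    nlinarith [sq_nonneg (dotP u θ * dotP w θ * Real.exp (-t)
      + crossP u θ * crossP w θ * Real.exp t), h2]
  calc |crossP u w| = Real.sqrt (crossP u w ^ 2) := (Real.sqrt_sq_eq_abs _).symm
    _ ≤ Real.sqrt ((gnorm θ t u * gnorm θ t w) ^ 2) := Real.sqrt_le_sqrt h1
    _ = gnorm θ t u * gnorm θ t w :=
      Real.sqrt_sq (mul_nonneg (gnorm_nonneg θ t u) (gnorm_nonneg θ t w))

lemma gnorm_lower {θ : ℝ × ℝ} (hθ : nrm θ = 1) (t : ℝ) (u : ℝ × ℝ) :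
    Real.exp (-|t|) * nrm u ^ 2 ≤ gnorm θ t u ^ 2 := by
  rw [gnorm_sq, ← pyth hθ u]
  have h1 : Real.exp (-|t|) ≤ Real.exp (-t) := Real.exp_le_exp.2 (neg_le_neg (le_abs_self t))
  have h2 : Real.exp (-|t|) ≤ Real.exp t := Real.exp_le_exp.2 (neg_abs_le t)
  nlinarith [sq_nonneg (dotP u θ), sq_nonneg (crossP u θ)]

lemma gnorm_neg_eq (θ : ℝ × ℝ) (t : ℝ) (u : ℝ × ℝ) : gnorm θ t (-u) = gnorm θ t u := by
  simp only [gnorm, dotP, crossP, Prod.fst_neg, Prod.snd_neg]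
  congr 1; ring

lemma gnorm_pos {θ v : ℝ × ℝ} (hθ : nrm θ = 1) (t : ℝ) (hv : v ≠ 0) : 0 < gnorm θ t v := by
  apply Real.sqrt_pos.2
  have hp := pyth hθ v
  have hnv := nrm_pos hv
  have h : 0 < dotP v θ ^ 2 + crossP v θ ^ 2 := by rw [hp]; positivity
  have h' : dotP v θ ≠ 0 ∨ crossP v θ ≠ 0 := by
    by_contra hh; push_neg at hh; rw [hh.1, hh.2] at h; simp at h
  rcases h' with h1 | h1
  · have ha : 0 < dotP v θ ^ 2 * Real.exp (-t) := by positivity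
    have hb : 0 ≤ crossP v θ ^ 2 * Real.exp t := by positivity
    linarith
  · have ha : 0 < crossP v θ ^ 2 * Real.exp t := by positivity
    have hb : 0 ≤ dotP v θ ^ 2 * Real.exp (-t) := by positivity
    linarith

lemma le_of_sq_le' {x y : ℝ} (hy : 0 ≤ y) (h : x ^ 2 ≤ y ^ 2) (hx : 0 ≤ x) : x ≤ y := by
  nlinarith

lemma cross_zero_imp {v u : ℝ × ℝ} (hv : v ≠ 0) (h : crossP v u = 0) : ∃ k : ℝ, u = k • v := by
  have h' : v.1 * u.2 - v.2 * u.1 = 0 := h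
  have hv' : v.1 ≠ 0 ∨ v.2 ≠ 0 := by
    by_contra hh; push_neg at hh
    exact hv (by rw [Prod.ext_iff]; exact ⟨by simpa using hh.1, by simpa using hh.2⟩)
  rcases hv' with h1 | h1
  · refine ⟨u.1 / v.1, ?_⟩
    rw [Prod.ext_iff]
    constructor
    · simp only [Prod.smul_fst, smul_eq_mul]; field_simp
    · simp only [Prod.smul_snd, smul_eq_mul]; field_simp; nlinarith [h']
  · refine ⟨u.2 / v.2, ?_⟩
    rw [Prod.ext_iff]
    constructor
    · simp only [Prod.smul_fst, smul_eq_mul]; field_simp; nlinarith [h']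
    · simp only [Prod.smul_snd, smul_eq_mul]; field_simp

lemma main_step (V : Set (ℝ × ℝ)) (θ v : ℝ × ℝ) (hθ : nrm θ = 1) (hv0 : v ≠ 0) (t : ℝ)
    (H1 : ∀ u ∈ V, nrm u ≤ Real.sqrt 2 * nrm v → u ≠ v → u ≠ -v →
      gnorm θ t v ^ 2 ≤ |crossP v u|)
    (H2 : gnorm θ t v ^ 2 ≤ Real.exp (-|t|) * (2 * nrm v ^ 2)) :
    ∀ u ∈ V, gnorm θ t v ≤ gnorm θ t u := by
  intro u hu
  by_cases h1 : u = v
  · subst h1; exact le_refl _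
  by_cases h2 : u = -v
  · subst h2; rw [gnorm_neg_eq]
  by_cases h3 : nrm u ≤ Real.sqrt 2 * nrm v
  · have hH := H1 u hu h3 h1 h2
    have hc := cross_le hθ t v u
    have hp := gnorm_pos hθ t hv0
    nlinarith [gnorm_nonneg θ t u]
  · push_neg at h3
    have h5 : (Real.sqrt 2 * nrm v) ^ 2 = 2 * nrm v ^ 2 := by
      rw [mul_pow, Real.sq_sqrt (by norm_num : (0:ℝ) ≤ 2)]
    have h4 : 2 * nrm v ^ 2 ≤ nrm u ^ 2 := by
      rw [← h5]; exact pow_le_pow_left₀ (mul_nonneg (Real.sqrt_nonneg 2) (nrm_nonneg v)) h3.le 2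
    have h6 := gnorm_lower hθ t u
    apply le_of_sq_le' (gnorm_nonneg θ t u) ?_ (gnorm_nonneg θ t v)
    nlinarith [Real.exp_pos (-|t|)]

/-- Lemma "SVC".  If `v ∈ V` satisfies
`2|v||v×θ| ≤ min{|v×u| : u ∈ V, |u| ≤ √2|v|, u ≠ ±v}` then `ℓ(g_t^θ V) = |g_t^θ v|`
for all `t` in a nonempty open interval. -/
theorem slowly_divergent_svc
    (V : Set (ℝ × ℝ)) (hne : V.Nonempty)
    (hdisc : ∀ R : ℝ, {u ∈ V | nrm u ≤ R}.Finite)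
    (hsym : ∀ u ∈ V, {x : ℝ × ℝ | ∃ c : ℝ, x = c • u} ∩ V = {u, -u})
    (θ v : ℝ × ℝ) (hθ : nrm θ = 1) (hv : v ∈ V)
    (hmin : ∀ u ∈ V, nrm u ≤ Real.sqrt 2 * nrm v → u ≠ v → u ≠ -v →
      2 * nrm v * |crossP v θ| ≤ |crossP v u|) :
    ∃ a b : ℝ, a < b ∧
      ∀ t ∈ Set.Ioo a b, ∀ u ∈ V, gnorm θ t v ≤ gnorm θ t u := by
  by_cases hv0 : v = 0
  · refine ⟨0, 1, one_pos, ?_⟩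
    intro t _ u _
    have h0 : gnorm θ t v = 0 := by
      subst hv0; simp [gnorm, dotP, crossP]
    rw [h0]; exact gnorm_nonneg θ t u
  have hnv := nrm_pos hv0
  have hp := pyth hθ v
  by_cases hC : crossP v θ = 0
  · -- v parallel to θ : take t large
    have hfin := hdisc (Real.sqrt 2 * nrm v)
    have hev : ∀ᶠ t : ℝ in Filter.atTop,
        (∀ u ∈ {u ∈ V | nrm u ≤ Real.sqrt 2 * nrm v},
          u ≠ v → u ≠ -v → nrm v ^ 2 * Real.exp (-t) ≤ |crossP v u|) ∧ 0 < t := by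
      refine Filter.Eventually.and ?_ (Filter.eventually_gt_atTop 0)
      rw [Filter.eventually_all_finite hfin]
      intro u hu
      by_cases h12 : u = v ∨ u = -v
      · filter_upwards with t h1 h2; tauto
      push_neg at h12
      have hpos : 0 < |crossP v u| := by
        rcases eq_or_ne (crossP v u) 0 with hz | hz
        · obtain ⟨k, hk⟩ := cross_zero_imp hv0 hz
          have hmem : u ∈ ({v, -v} : Set (ℝ × ℝ)) := by
            rw [← hsym v hv]; exact ⟨⟨k, hk⟩, hu.1⟩
          simp only [Set.mem_insert_iff, Set.mem_singleton_iff] at hmem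
          tauto
        · exact abs_pos.2 hz
      have htend : Filter.Tendsto (fun t : ℝ => nrm v ^ 2 * Real.exp (-t))
          Filter.atTop (nhds 0) := by
        simpa using (Real.tendsto_exp_neg_atTop_nhds_zero.const_mul (nrm v ^ 2))
      filter_upwards [htend.eventually_lt_const hpos] with t ht _ _
      exact ht.le
    obtain ⟨T, hT⟩ := Filter.eventually_atTop.1 hev
    refine ⟨T, T + 1, by linarith, ?_⟩
    intro t ht u hu
    obtain ⟨hT1, hT2⟩ := hT t ht.1.le
    have hd2 : dotP v θ ^ 2 = nrm v ^ 2 := by rw [hC] at hp; linarith [hp]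
    refine main_step V θ v hθ hv0 t ?_ ?_ u hu
    · intro w hw h3 h4 h5
      have := hT1 w ⟨hw, h3⟩ h4 h5
      rw [gnorm_sq, hC, hd2]
      nlinarith [Real.exp_pos (-t)]
    · rw [gnorm_sq, hC, hd2, abs_of_pos hT2]
      nlinarith [Real.exp_pos (-t), sq_nonneg (nrm v)]
  by_cases hD : dotP v θ = 0
  · -- v perpendicular to θ : take t negative
    have hc2 : crossP v θ ^ 2 = nrm v ^ 2 := by rw [hD] at hp; linarith [hp]
    have hcabs : |crossP v θ| = nrm v := by
      nlinarith [sq_abs (crossP v θ), abs_nonneg (crossP v θ), nrm_nonneg v]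
    refine ⟨-1, 0, by norm_num, ?_⟩
    intro t ht u hu
    have het : Real.exp t < 1 := Real.exp_lt_one_iff.2 ht.2
    refine main_step V θ v hθ hv0 t ?_ ?_ u hu
    · intro w hw h3 h4 h5
      have hm := hmin w hw h3 h4 h5
      rw [hcabs] at hm
      rw [gnorm_sq, hD, hc2]
      nlinarith [Real.exp_pos t, sq_nonneg (nrm v)]
    · rw [gnorm_sq, hD, hc2, abs_of_neg ht.2, neg_neg]
      nlinarith [Real.exp_pos t, sq_nonneg (nrm v)]
  · -- generic case
    have hC2 : 0 < crossP v θ ^ 2 := (sq_nonneg _).lt_of_ne (Ne.symm (pow_ne_zero 2 hC))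
    have hD2 : 0 < dotP v θ ^ 2 := (sq_nonneg _).lt_of_ne (Ne.symm (pow_ne_zero 2 hD))
    have hCpos : 0 < |crossP v θ| := abs_pos.2 hC
    have hDpos : 0 < |dotP v θ| := abs_pos.2 hD
    set t0 := Real.log (|dotP v θ| / |crossP v θ|) with ht0def
    have hexp : Real.exp t0 = |dotP v θ| / |crossP v θ| := Real.exp_log (by positivity)
    have hexp' : Real.exp (-t0) = |crossP v θ| / |dotP v θ| := by
      rw [Real.exp_neg, hexp, inv_div]
    set O := {t : ℝ | dotP v θ ^ 2 * Real.exp (-t) + crossP v θ ^ 2 * Real.exp t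
        < 2 * nrm v * |crossP v θ|} ∩
      {t : ℝ | dotP v θ ^ 2 * Real.exp (-t) + crossP v θ ^ 2 * Real.exp t
        < Real.exp (-|t|) * (2 * nrm v ^ 2)} with hOdef
    have hcont : Continuous (fun t : ℝ =>
        dotP v θ ^ 2 * Real.exp (-t) + crossP v θ ^ 2 * Real.exp t) :=
      (continuous_const.mul (Real.continuous_exp.comp continuous_neg)).add
        (continuous_const.mul Real.continuous_exp)
    have hcont2 : Continuous (fun t : ℝ => Real.exp (-|t|) * (2 * nrm v ^ 2)) :=
      (Real.continuous_exp.comp continuous_abs.neg).mul continuous_const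
    have hopen : IsOpen O :=
      (isOpen_lt hcont continuous_const).inter (isOpen_lt hcont hcont2)
    have haD : |dotP v θ| ^ 2 = dotP v θ ^ 2 := sq_abs _
    have haC : |crossP v θ| ^ 2 = crossP v θ ^ 2 := sq_abs _
    have hval : dotP v θ ^ 2 * Real.exp (-t0) + crossP v θ ^ 2 * Real.exp t0
        = 2 * (|crossP v θ| * |dotP v θ|) := by
      rw [hexp, hexp']
      have p : |crossP v θ| * |crossP v θ| = crossP v θ ^ 2 := by
        rw [abs_mul_abs_self]; ring
      have q : |dotP v θ| * |dotP v θ| = dotP v θ ^ 2 := by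
        rw [abs_mul_abs_self]; ring
      field_simp
      linear_combination (-(dotP v θ ^ 2)) * p
        + (crossP v θ ^ 2 - 2 * (|crossP v θ| * |crossP v θ|)) * q
    have hDlt : |dotP v θ| < nrm v := by nlinarith [nrm_nonneg v]
    have hClt : |crossP v θ| < nrm v := by nlinarith [nrm_nonneg v]
    have ht0 : t0 ∈ O := by
      constructor
      · show dotP v θ ^ 2 * Real.exp (-t0) + crossP v θ ^ 2 * Real.exp t0
          < 2 * nrm v * |crossP v θ|
        rw [hval]; nlinarith
      · show dotP v θ ^ 2 * Real.exp (-t0) + crossP v θ ^ 2 * Real.exp t0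
          < Real.exp (-|t0|) * (2 * nrm v ^ 2)
        rw [hval]
        rcases le_or_gt 0 t0 with h | h
        · rw [abs_of_nonneg h, hexp']
          rw [div_mul_eq_mul_div, lt_div_iff₀ hDpos]
          nlinarith
        · rw [abs_of_neg h, neg_neg, hexp]
          rw [div_mul_eq_mul_div, lt_div_iff₀ hCpos]
          nlinarith
    obtain ⟨ε, hε, hball⟩ := Metric.isOpen_iff.1 hopen t0 ht0
    refine ⟨t0 - ε, t0 + ε, by linarith, ?_⟩
    intro t ht u hu
    have htO : t ∈ O := by
      apply hball
      rw [Metric.mem_ball, Real.dist_eq, abs_lt]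
      exact ⟨by linarith [ht.1], by linarith [ht.2]⟩
    obtain ⟨hO1, hO2⟩ := htO
    simp only [Set.mem_setOf_eq] at hO1 hO2
    refine main_step V θ v hθ hv0 t ?_ ?_ u hu
    · intro w hw h3 h4 h5
      have hm := hmin w hw h3 h4 h5
      rw [gnorm_sq]
      linarith
    · rw [gnorm_sq]
      linarith
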